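/- Let G be a bipartite graph with parts X (|X| = m, all degrees l) and Y (|Y| = n, all degrees k), m ≥ n, ml = nk. Then for every integer t with k ≤ t ≤ nk, there exists a proper edge t-coloring of G interval on Y. -/

import Mathlib

/-- A proper edge `t`-coloring of the bipartite graph with parts `α`, `β` and
edge set `E ⊆ α × β`: colors lie in `{1,…,t}`, all colors are used, and
adjacent edges (sharing an endpoint) get distinct colors. -/
def IsProperEdgeColoring {α β : Type*} (E : Finset (α × β)) (t : ℕ)
    (φ : α × β → ℕ) : Prop :=
  (∀ e ∈ E, φ e ∈ Finset.Icc 1 t) ∧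
  (∀ c ∈ Finset.Icc 1 t, ∃ e ∈ E, φ e = c) ∧
  (∀ e ∈ E, ∀ e' ∈ E, e ≠ e' → (e.1 = e'.1 ∨ e.2 = e'.2) → φ e ≠ φ e')

/-- The spectrum of a vertex `x` of the part `α`: the set of colors on edges
incident with `x`. -/
def spectX {α β : Type*} [DecidableEq α] (E : Finset (α × β))
    (φ : α × β → ℕ) (x : α) : Finset ℕ :=
  (E.filter fun e => e.1 = x).image φ

/-- The spectrum of a vertex `y` of the part `β`. -/
def spectY {α β : Type*} [DecidableEq β] (E : Finset (α × β))
    (φ : α × β → ℕ) (y : β) : Finset ℕ :=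
  (E.filter fun e => e.2 = y).image φ

/-- Degree of a vertex of the part `α`. -/
def degX {α β : Type*} [DecidableEq α] (E : Finset (α × β)) (x : α) : ℕ :=
  (E.filter fun e => e.1 = x).card

/-- Degree of a vertex of the part `β`. -/
def degY {α β : Type*} [DecidableEq β] (E : Finset (α × β)) (y : β) : ℕ :=
  (E.filter fun e => e.2 = y).card

/-- A finite set of naturals is an interval: nonempty and consisting of
consecutive integers. -/
def IsIntervalFinset (S : Finset ℕ) : Prop :=
  S.Nonempty ∧ ∀ a ∈ S, ∀ b ∈ S, ∀ c, a ≤ c → c ≤ b → c ∈ S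

/-- The coloring is interval in every vertex of the part `α` (every vertex
with at least one incident edge has an interval spectrum). -/
def IntervalOnX {α β : Type*} [DecidableEq α] (E : Finset (α × β))
    (φ : α × β → ℕ) : Prop :=
  ∀ x : α, (spectX E φ x).Nonempty → IsIntervalFinset (spectX E φ x)

/-- The coloring is interval in every vertex of the part `β`. -/
def IntervalOnY {α β : Type*} [DecidableEq β] (E : Finset (α × β))
    (φ : α × β → ℕ) : Prop :=
  ∀ y : β, (spectY E φ y).Nonempty → IsIntervalFinset (spectY E φ y)

/-- Maximum degree of the bipartite graph. -/
def maxDeg {α β : Type*} [Fintype α] [Fintype β] [DecidableEq α] [DecidableEq β]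
    (E : Finset (α × β)) : ℕ :=
  max (Finset.univ.sup (degX E)) (Finset.univ.sup (degY E))

/-!
Since `m l = n k` and `n ≤ m`, every vertex of `X` has degree at most `k`, so König's theorem gives
a proper edge coloring `c` with colors `0, …, k - 1`; it follows by induction from Hall's theorem,
removing a matching that covers every vertex of maximum degree. Number the vertices of `Y` as
`y₀, …, yₙ₋₁`, put `aᵢ = min (i k) (t - k)`, and recolor each edge at `yᵢ` by the unique color in
`[aᵢ + 1, aᵢ + k]` congruent to its `c`-color modulo `k`. Adjacent edges keep distinct residues, so
the coloring stays proper, `yᵢ` sees exactly the interval `[aᵢ + 1, aᵢ + k]`, and these intervals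
cover `[1, t]` because `k ≤ t ≤ n k`.
-/

open Finset

section Counting

variable {α β : Type*}

theorem card_filter_snd_mem [DecidableEq β] (F : Finset (α × β)) (S : Finset β) :
    #{e ∈ F | e.2 ∈ S} = ∑ y ∈ S, degY F y := by
  rw [card_eq_sum_card_fiberwise (s := {e ∈ F | e.2 ∈ S}) (t := S) (f := Prod.snd)
    fun e he => (mem_filter.1 he).2]
  refine sum_congr rfl fun y hy => ?_
  rw [filter_filter, degY]
  congr 1
  exact filter_congr fun e _ => ⟨And.right, fun h => ⟨h ▸ hy, h⟩⟩

theorem card_filter_fst_mem [DecidableEq α] (F : Finset (α × β)) (S : Finset α) :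
    #{e ∈ F | e.1 ∈ S} = ∑ x ∈ S, degX F x := by
  rw [card_eq_sum_card_fiberwise (s := {e ∈ F | e.1 ∈ S}) (t := S) (f := Prod.fst)
    fun e he => (mem_filter.1 he).2]
  refine sum_congr rfl fun x hx => ?_
  rw [filter_filter, degX]
  congr 1
  exact filter_congr fun e _ => ⟨And.right, fun h => ⟨h ▸ hx, h⟩⟩

theorem card_le_mul_card_image_fst [DecidableEq α] {F G : Finset (α × β)} {j : ℕ}
    (hX : ∀ x, degX F x ≤ j) (hG : G ⊆ F) : #G ≤ j * #(G.image Prod.fst) :=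
  card_le_mul_card_image G j fun x _ =>
    (card_le_card (filter_subset_filter _ hG)).trans (hX x)

end Counting

section Hall

def neighborsX {α β : Type*} [DecidableEq α] [DecidableEq β] (F : Finset (α × β))
    (S : Finset β) : Finset α :=
  ({e ∈ F | e.2 ∈ S}).image Prod.fst

def deficientX {α β : Type*} [Fintype α] [DecidableEq α] (F : Finset (α × β)) (j : ℕ) :
    Finset α :=
  {x | degX F x ≠ j}

variable {α β : Type*} [DecidableEq α] [DecidableEq β] {F : Finset (α × β)} {j : ℕ}

theorem card_le_card_neighborsX (hj : 0 < j) (hY : ∀ y, degY F y = j)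
    (hX : ∀ x, degX F x ≤ j) (S : Finset β) : #S ≤ #(neighborsX F S) := by
  have h := card_le_mul_card_image_fst hX (filter_subset (·.2 ∈ S) F)
  rw [card_filter_snd_mem, sum_congr rfl fun y _ => hY y, sum_const, smul_eq_mul,
    mul_comm] at h
  exact Nat.le_of_mul_le_mul_left h hj

theorem card_le_card_deficient_union_neighborsX [Fintype α] [Fintype β] (hj : 0 < j)
    (hY : ∀ y, degY F y = j) (S : Finset β) :
    Fintype.card α ≤ #(deficientX F j ∪ neighborsX F S) + (Fintype.card β - #S) := by
  set B : Finset α := {x | degX F x = j ∧ x ∉ neighborsX F S}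
  have hB : #B ≤ Fintype.card β - #S := by
    have hsub : {e ∈ F | e.1 ∈ B} ⊆ {e ∈ F | e.2 ∈ Sᶜ} := by
      intro e he
      obtain ⟨heF, heB⟩ := mem_filter.1 he
      refine mem_filter.2 ⟨heF, mem_compl.2 fun heS => (mem_filter.1 heB).2.2 ?_⟩
      exact mem_image.2 ⟨e, mem_filter.2 ⟨heF, heS⟩, rfl⟩
    have h := card_le_card hsub
    rw [card_filter_fst_mem, sum_congr rfl fun x hx => (mem_filter.1 hx).2.1,
      card_filter_snd_mem, sum_congr rfl fun y _ => hY y, sum_const, sum_const,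
      card_compl, smul_eq_mul, smul_eq_mul] at h
    exact Nat.le_of_mul_le_mul_right h hj
  have hcover : (univ : Finset α) ⊆ (deficientX F j ∪ neighborsX F S) ∪ B := by
    intro x _
    by_cases hx : degX F x = j <;> by_cases hN : x ∈ neighborsX F S <;>
      simp [B, deficientX, hx, hN]
  calc Fintype.card α = #(univ : Finset α) := card_univ.symm
    _ ≤ #((deficientX F j ∪ neighborsX F S) ∪ B) := card_le_card hcover
    _ ≤ #(deficientX F j ∪ neighborsX F S) + #B := card_union_le _ _
    _ ≤ _ := by omega

/-- Padding the part `β` with `|α| - |β|` copies of the set of vertices of degree `< j`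
reduces the claim to Hall's theorem; the padded matching is then a bijection. -/
theorem exists_matching_covering_maxDegree [Fintype α] [Fintype β] (hj : 0 < j)
    (hY : ∀ y, degY F y = j) (hX : ∀ x, degX F x ≤ j) :
    ∃ g : β → α, Function.Injective g ∧ (∀ y, (g y, y) ∈ F) ∧
      ∀ x, degX F x = j → x ∈ Set.range g := by
  let A : β ⊕ Fin (Fintype.card α - Fintype.card β) → Finset α :=
    Sum.elim (fun y => neighborsX F {y}) fun _ => deficientX F j
  have hall : ∀ s, #s ≤ #(s.biUnion A) := by
    intro s
    have hN : neighborsX F s.toLeft ⊆ s.biUnion A := by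
      intro x hx
      obtain ⟨e, he, rfl⟩ := mem_image.1 hx
      obtain ⟨heF, heS⟩ := mem_filter.1 he
      exact mem_biUnion.2 ⟨.inl e.2, mem_toLeft.1 heS,
        mem_image.2 ⟨e, mem_filter.2 ⟨heF, mem_singleton_self _⟩, rfl⟩⟩
    rw [← card_toLeft_add_card_toRight (u := s)]
    rcases s.toRight.eq_empty_or_nonempty with h | ⟨z, hz⟩
    · rw [h, card_empty, add_zero]
      exact (card_le_card_neighborsX hj hY hX _).trans (card_le_card hN)
    · have hD : deficientX F j ⊆ s.biUnion A := fun x hx =>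
        mem_biUnion.2 ⟨.inr z, mem_toRight.1 hz, hx⟩
      have h1 := card_le_card_deficient_union_neighborsX hj hY s.toLeft
      have h2 := card_le_card (union_subset hD hN)
      have h3 : #s.toRight ≤ Fintype.card α - Fintype.card β := by
        simpa using card_le_univ s.toRight
      have h4 : #s.toLeft ≤ Fintype.card β := card_le_univ _
      have h5 : 0 < #s.toRight := card_pos.2 ⟨z, hz⟩
      omega
  obtain ⟨f, hf, hfA⟩ := (all_card_le_biUnion_card_iff_exists_injective A).1 hall
  have hbij : Function.Bijective f := by
    refine (Fintype.bijective_iff_injective_and_card f).2 ⟨hf, ?_⟩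
    have := Fintype.card_le_of_injective f hf
    simp only [Fintype.card_sum, Fintype.card_fin] at this ⊢
    omega
  refine ⟨f ∘ Sum.inl, hf.comp Sum.inl_injective, fun y => ?_, fun x hx => ?_⟩
  · obtain ⟨e, he, hex⟩ := mem_image.1 (hfA (.inl y))
    obtain ⟨heF, hey⟩ := mem_filter.1 he
    rwa [show e = ((f ∘ Sum.inl) y, y) from Prod.ext hex (mem_singleton.1 hey)] at heF
  · obtain ⟨i | z, rfl⟩ := hbij.2 x
    · exact ⟨i, rfl⟩
    · exact absurd hx (mem_filter.1 (hfA (.inr z)) :).2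

end Hall

def IsProperOn {α β : Type*} (E : Finset (α × β)) (c : α × β → ℕ) : Prop :=
  ∀ e ∈ E, ∀ e' ∈ E, e ≠ e' → (e.1 = e'.1 ∨ e.2 = e'.2) → c e ≠ c e'

section EdgeColoring

variable {α β : Type*} {F : Finset (α × β)} {g : β → α}

theorem degY_filter_ne_matching [DecidableEq α] [DecidableEq β] (hg : ∀ y, (g y, y) ∈ F)
    (y : β) :
    degY {e ∈ F | e.1 ≠ g e.2} y = degY F y - 1 := by
  have h : {e ∈ {e ∈ F | e.1 ≠ g e.2} | e.2 = y} = ({e ∈ F | e.2 = y}).erase (g y, y) := by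
    ext ⟨x, y'⟩
    simp only [mem_filter, mem_erase, ne_eq, Prod.mk.injEq]
    constructor
    · rintro ⟨⟨hF, hx⟩, rfl⟩
      exact ⟨fun h => hx h.1, hF, rfl⟩
    · rintro ⟨hx, hF, rfl⟩
      exact ⟨⟨hF, fun h => hx ⟨h, rfl⟩⟩, rfl⟩
  have hgy : (g y, y) ∈ {e ∈ F | e.2 = y} := mem_filter.2 ⟨hg y, rfl⟩
  rw [degY, h, card_erase_of_mem hgy, degY]

theorem degX_filter_ne_matching_le [DecidableEq α] (x : α) :
    degX {e ∈ F | e.1 ≠ g e.2} x ≤ degX F x :=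
  card_le_card (filter_subset_filter _ (filter_subset _ _))

theorem degX_filter_ne_matching_lt [DecidableEq α] (hg : ∀ y, (g y, y) ∈ F) (y : β) :
    degX {e ∈ F | e.1 ≠ g e.2} (g y) < degX F (g y) := by
  refine card_lt_card ((ssubset_iff_of_subset
    (filter_subset_filter _ (filter_subset _ _))).2 ⟨(g y, y), ?_, ?_⟩)
  · exact mem_filter.2 ⟨hg y, rfl⟩
  · simp

theorem exists_isProperOn_lt [DecidableEq α] [DecidableEq β] [Fintype α] [Fintype β] (j : ℕ)
    (hY : ∀ y, degY F y = j) (hX : ∀ x, degX F x ≤ j) :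
    ∃ c : α × β → ℕ, (∀ e ∈ F, c e < j) ∧ IsProperOn F c := by
  induction j generalizing F with
  | zero =>
    have hF : ∀ e ∈ F, False := fun e he => by
      have : 0 < degY F e.2 := card_pos.2 ⟨e, mem_filter.2 ⟨he, rfl⟩⟩
      rw [hY] at this
      exact this.false
    exact ⟨0, fun e he => (hF e he).elim, fun e he => (hF e he).elim⟩
  | succ j ih =>
    obtain ⟨g, hg_inj, hgF, hg_cover⟩ := exists_matching_covering_maxDegree j.succ_pos hY hX
    have hY' (y : β) : degY {e ∈ F | e.1 ≠ g e.2} y = j := by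
      rw [degY_filter_ne_matching hgF, hY, Nat.add_sub_cancel]
    have hX' (x : α) : degX {e ∈ F | e.1 ≠ g e.2} x ≤ j := by
      by_cases hx : degX F x = j + 1
      · obtain ⟨y, rfl⟩ := hg_cover x hx
        have := degX_filter_ne_matching_lt hgF y
        omega
      · have := degX_filter_ne_matching_le (F := F) (g := g) x
        have := hX x
        omega
    obtain ⟨c, hc_lt, hc⟩ := ih hY' hX'
    have hc_lt' {e} (he : e ∈ F) (h : e.1 ≠ g e.2) : c e < j := hc_lt e (mem_filter.2 ⟨he, h⟩)
    refine ⟨fun e => if e.1 = g e.2 then j else c e, fun e he => ?_, ?_⟩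
    · dsimp only
      split_ifs with h
      · exact j.lt_succ_self
      · exact (hc_lt' he h).trans j.lt_succ_self
    intro e he e' he' hne hadj
    by_cases h : e.1 = g e.2 <;> by_cases h' : e'.1 = g e'.2 <;>
      simp only [h, h', if_true, if_false]
    · refine (hne (Prod.ext ?_ ?_)).elim <;> rcases hadj with hadj | hadj
      · exact hadj
      · rw [h, h', hadj]
      · exact hg_inj (h.symm.trans (hadj.trans h'))
      · exact hadj
    · exact (hc_lt' he' h').ne'
    · exact (hc_lt' he h).ne
    · exact hc e (mem_filter.2 ⟨he, h⟩) e' (mem_filter.2 ⟨he', h'⟩) hne hadj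

end EdgeColoring

/-- The element of `[a + 1, a + k]` congruent to `c` modulo `k`. -/
def residueInInterval (a k c : ℕ) : ℕ :=
  a + 1 + (c + k - (a + 1) % k) % k

theorem residueInInterval_mem_Icc {k : ℕ} (hk : 0 < k) (a c : ℕ) :
    residueInInterval a k c ∈ Icc (a + 1) (a + k) := by
  have := Nat.mod_lt (c + k - (a + 1) % k) hk
  rw [residueInInterval, mem_Icc]
  omega

theorem residueInInterval_mod {k : ℕ} (hk : 0 < k) (a c : ℕ) :
    residueInInterval a k c % k = c % k := by
  have := Nat.mod_lt (a + 1) hk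
  calc residueInInterval a k c % k = ((a + 1) % k + (c + k - (a + 1) % k)) % k :=
        ((Nat.mod_modEq _ _).symm.add (Nat.mod_modEq _ _) : _)
    _ = (c + k) % k := by congr 1; omega
    _ = c % k := Nat.add_mod_right c k

theorem IsProperOn.of_mod_eq {α β : Type*} {E : Finset (α × β)} {c φ : α × β → ℕ} {k : ℕ}
    (hc : IsProperOn E c) (hφ : ∀ e ∈ E, φ e % k = c e) : IsProperOn E φ := by
  intro e he e' he' hne hadj hφe
  exact hc e he e' he' hne hadj (by rw [← hφ e he, ← hφ e' he', hφe])

theorem spectY_eq_Icc {α β : Type*} [DecidableEq β] {E : Finset (α × β)} {φ : α × β → ℕ}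
    {y : β} {a k : ℕ} (hφ : IsProperOn E φ) (hdeg : degY E y = k)
    (hmem : ∀ e ∈ E, e.2 = y → φ e ∈ Icc (a + 1) (a + k)) :
    spectY E φ y = Icc (a + 1) (a + k) := by
  have hinj : Set.InjOn φ ({e ∈ E | e.2 = y} : Finset (α × β)) := by
    intro e he e' he' h
    by_contra hne
    have he := mem_filter.1 he
    have he' := mem_filter.1 he'
    exact hφ e he.1 e' he'.1 hne (.inr (he.2.trans he'.2.symm)) h
  refine eq_of_subset_of_card_le ?_ ?_
  · intro z hz
    obtain ⟨e, he, rfl⟩ := mem_image.1 hz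
    exact hmem e (mem_filter.1 he).1 (mem_filter.1 he).2
  · rw [spectY, card_image_of_injOn hinj, ← degY, hdeg, Nat.card_Icc]
    omega

theorem isIntervalFinset_Icc {a b : ℕ} (h : a ≤ b) : IsIntervalFinset (Icc a b) :=
  ⟨nonempty_Icc.2 h, fun _ ha _ hb _ hac hcb =>
    mem_Icc.2 ⟨(mem_Icc.1 ha).1.trans hac, hcb.trans (mem_Icc.1 hb).2⟩⟩

theorem exists_lt_mem_Icc_min {n k t c : ℕ} (hk : 0 < k) (htn : t ≤ n * k)
    (hc : c ∈ Icc 1 t) :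
    ∃ i < n, c ∈ Icc (min (i * k) (t - k) + 1) (min (i * k) (t - k) + k) := by
  rw [mem_Icc] at hc
  refine ⟨(c - 1) / k, (Nat.div_lt_iff_lt_mul hk).2 (by omega), ?_⟩
  have h₁ := Nat.div_mul_le_self (c - 1) k
  have h₂ := Nat.lt_div_mul_add (a := c - 1) hk
  rw [mem_Icc]
  omega

theorem stmt15_general {α β : Type*} [Fintype α] [Fintype β] [DecidableEq α] [DecidableEq β]
    (E : Finset (α × β)) (m n l k : ℕ)
    (hm : 0 < m) (hk : 0 < k)
    (hcardY : Fintype.card β = n)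
    (hdX : ∀ x : α, degX E x = l) (hdY : ∀ y : β, degY E y = k)
    (hnm : n ≤ m) (hml : m * l = n * k) :
    ∀ t : ℕ, k ≤ t → t ≤ n * k →
      ∃ φ : α × β → ℕ, IsProperEdgeColoring E t φ ∧ IntervalOnY E φ := by
  intro t hkt htn
  have hlk : l ≤ k := Nat.le_of_mul_le_mul_left (hml ▸ Nat.mul_le_mul_right k hnm) hm
  obtain ⟨c, hc_lt, hc⟩ := exists_isProperOn_lt k hdY fun x => (hdX x).trans_le hlk
  let idx := Fintype.equivFinOfCardEq hcardY
  let a (y : β) := min (idx y * k) (t - k)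
  let φ (e : α × β) := residueInInterval (a e.2) k (c e)
  have hφ : IsProperOn E φ := hc.of_mod_eq fun e he =>
    (residueInInterval_mod hk _ _).trans (Nat.mod_eq_of_lt (hc_lt e he))
  have hspec (y : β) : spectY E φ y = Icc (a y + 1) (a y + k) :=
    spectY_eq_Icc hφ (hdY y) fun e _ hey => hey ▸ residueInInterval_mem_Icc hk _ _
  refine ⟨φ, ⟨fun e _ => ?_, fun c' hc' => ?_, hφ⟩, fun y _ => ?_⟩
  · have : a e.2 + k ≤ t := by have : a e.2 ≤ t - k := min_le_right _ _; omega
    exact Icc_subset_Icc (by omega) this (residueInInterval_mem_Icc hk _ _)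
  · obtain ⟨i, hi, hc'i⟩ := exists_lt_mem_Icc_min hk htn hc'
    have : c' ∈ spectY E φ (idx.symm ⟨i, hi⟩) := by simpa [hspec, a] using hc'i
    obtain ⟨e, he, rfl⟩ := mem_image.1 this
    exact ⟨e, (mem_filter.1 he).1, rfl⟩
  · rw [hspec]
    exact isIntervalFinset_Icc (by omega)

/-- For an `(l,k)`-biregular bipartite graph (`|X| = m`,
`|Y| = n`, `m ≥ n`, `ml = nk`) and every `t` with `k ≤ t ≤ nk`, there is a
proper edge `t`-coloring interval on `Y`. -/
theorem stmt15 {α β : Type*} [Fintype α] [Fintype β] [DecidableEq α] [DecidableEq β]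
    (E : Finset (α × β)) (m n l k : ℕ)
    (hm : 0 < m) (hn : 0 < n) (hl : 0 < l) (hk : 0 < k)
    (hcardX : Fintype.card α = m) (hcardY : Fintype.card β = n)
    (hdX : ∀ x : α, degX E x = l) (hdY : ∀ y : β, degY E y = k)
    (hnm : n ≤ m) (hml : m * l = n * k) :
    ∀ t : ℕ, k ≤ t → t ≤ n * k →
      ∃ φ : α × β → ℕ, IsProperEdgeColoring E t φ ∧ IntervalOnY E φ :=
  stmt15_general E m n l k hm hk hcardY hdX hdY hnm hml
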